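/- For every turn-based CGS, every coalition A ⊆ Agt, and all ATL state formulas φ and ψ, a location satisfies ⟨A⟩(φ R ψ) if and only if it satisfies ¬⟨Agt∖A⟩((¬φ) U (¬ψ)). -/
import Mathlib


/-!  Core formalization of concurrent game structures (CGS), alternating
transition systems (ATS), and the logic ATL, following Alur-Henzinger-Kupferman
and Laroussinie-Markey-Oreiby, "On the Expressiveness and Complexity of ATL".

A generic "game structure" `GS Agt Loc P M` has locations labelled by atomic
propositions from `P`, and in each location each agent has a set of available
moves (of type `M`); a joint move (one move per agent) leads to a set of
possible successor locations (a singleton for CGSs, the intersection of the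
chosen sets for ATSs). -/

structure GS (Agt Loc P M : Type) where
  lab : Loc → Set P
  mov : Loc → Agt → Set M
  step : Loc → (Agt → M) → Set Loc

namespace GS

variable {Agt Loc P M : Type}

/-- a complete joint move, valid at `ℓ`. -/
def ValidMove (S : GS Agt Loc P M) (ℓ : Loc) (m : Agt → M) : Prop :=
  ∀ a, m a ∈ S.mov ℓ a

/-- `Next ℓ A mA`: locations reachable from `ℓ` when each member `a` of the
coalition `A` plays `mA a` (and the other agents play arbitrary valid moves). -/
def Next (S : GS Agt Loc P M) (ℓ : Loc) (A : Set Agt) (mA : Agt → M) : Set Loc :=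
  {ℓ' | ∃ m, S.ValidMove ℓ m ∧ (∀ a ∈ A, m a = mA a) ∧ ℓ' ∈ S.step ℓ m}

/-- all possible successors of `ℓ`. -/
def NextAll (S : GS Agt Loc P M) (ℓ : Loc) : Set Loc :=
  {ℓ' | ∃ m, S.ValidMove ℓ m ∧ ℓ' ∈ S.step ℓ m}

/-- the controllable predecessors: `ℓ ∈ CPre A T` iff coalition `A` has a move
forcing the next location to be in `T`. -/
def CPre (S : GS Agt Loc P M) (A : Set Agt) (T : Set Loc) : Set Loc :=
  {ℓ | ∃ mA : Agt → M, (∀ a ∈ A, mA a ∈ S.mov ℓ a) ∧ S.Next ℓ A mA ⊆ T}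

theorem cpre_mono (S : GS Agt Loc P M) (A : Set Agt) : Monotone (S.CPre A) := by
  intro T T' h ℓ hℓ
  obtain ⟨mA, hv, hn⟩ := hℓ
  exact ⟨mA, hv, hn.trans h⟩

/-- A strategy maps the (strict) past history and current location to a move
for each agent (only the moves of the coalition members are relevant). -/
def Strat (Agt Loc M : Type) : Type := List Loc → Loc → Agt → M

def StratValid (S : GS Agt Loc P M) (A : Set Agt) (F : Strat Agt Loc M) : Prop :=
  ∀ h ℓ a, a ∈ A → F h ℓ a ∈ S.mov ℓ a

/-- a strategy is memoryless (state-based) if it only depends on the current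
location. -/
def Memoryless (F : Strat Agt Loc M) : Prop :=
  ∀ h h' ℓ a, F h ℓ a = F h' ℓ a

/-- the history `ρ 0, …, ρ (i-1)`. -/
def hist (ρ : ℕ → Loc) (i : ℕ) : List Loc := List.ofFn (fun j : Fin i => ρ j)

/-- computations from `ℓ`. -/
def Comp (S : GS Agt Loc P M) (ℓ : Loc) (ρ : ℕ → Loc) : Prop :=
  ρ 0 = ℓ ∧ ∀ i, ρ (i + 1) ∈ S.NextAll (ρ i)

/-- the outcomes of a strategy `F` of coalition `A` from `ℓ`. -/
def Out (S : GS Agt Loc P M) (A : Set Agt) (ℓ : Loc) (F : Strat Agt Loc M)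
    (ρ : ℕ → Loc) : Prop :=
  ρ 0 = ℓ ∧ ∀ i, ρ (i + 1) ∈ S.Next (ρ i) A (F (hist ρ i) (ρ i))

end GS

/-! ### ATL syntax and semantics -/

mutual
  /-- ATL state formulas. -/
  inductive SForm (Agt P : Type) : Type where
    | tru : SForm Agt P
    | atom : P → SForm Agt P
    | snot : SForm Agt P → SForm Agt P
    | sor : SForm Agt P → SForm Agt P → SForm Agt P
    | coal : Set Agt → PForm Agt P → SForm Agt P
  /-- ATL path formulas. -/
  inductive PForm (Agt P : Type) : Type where
    | pnot : PForm Agt P → PForm Agt P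
    | nxt : SForm Agt P → PForm Agt P
    | untl : SForm Agt P → SForm Agt P → PForm Agt P
end

mutual
  /-- satisfaction of an ATL state formula at a location. -/
  def SSat {Agt Loc P M : Type} (S : GS Agt Loc P M) : SForm Agt P → Loc → Prop
    | .tru, _ => True
    | .atom p, ℓ => p ∈ S.lab ℓ
    | .snot φ, ℓ => ¬ SSat S φ ℓ
    | .sor φ ψ, ℓ => SSat S φ ℓ ∨ SSat S ψ ℓ
    | .coal A φ, ℓ =>
        ∃ F : GS.Strat Agt Loc M, S.StratValid A F ∧
          ∀ ρ : ℕ → Loc, S.Out A ℓ F ρ → PSat S φ ρ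
  /-- satisfaction of an ATL path formula along a sequence of locations. -/
  def PSat {Agt Loc P M : Type} (S : GS Agt Loc P M) : PForm Agt P → (ℕ → Loc) → Prop
    | .pnot φ, ρ => ¬ PSat S φ ρ
    | .nxt φ, ρ => SSat S φ (ρ 1)
    | .untl φ ψ, ρ => ∃ i, SSat S ψ (ρ i) ∧ ∀ j < i, SSat S φ (ρ j)
end

/-- the release modality:  `φ R ψ := ¬((¬φ) U (¬ψ))`. -/
def PForm.rel {Agt P : Type} (φ ψ : SForm Agt P) : PForm Agt P :=
  .pnot (.untl φ.snot ψ.snot)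

/-- the weak-until modality:  `φ W ψ := ψ R (φ ∨ ψ)`. -/
def PForm.wuntl {Agt P : Type} (φ ψ : SForm Agt P) : PForm Agt P :=
  PForm.rel ψ (φ.sor ψ)

/-- conjunction of state formulas. -/
def SForm.sand {Agt P : Type} (φ ψ : SForm Agt P) : SForm Agt P :=
  .snot (.sor φ.snot ψ.snot)

/-- the set of locations satisfying a state formula. -/
def SatSet {Agt Loc P M : Type} (S : GS Agt Loc P M) (φ : SForm Agt P) : Set Loc :=
  {ℓ | SSat S φ ℓ}

/-! ### Concurrent game structures (explicit) and alternating transition systems -/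

/-- an (explicit) concurrent game structure: moves are natural numbers, and the
transition table gives the successor of each joint move. -/
structure CGS (Agt Loc P : Type) where
  lab : Loc → Set P
  chc : Loc → Agt → Finset ℕ
  edg : Loc → (Agt → ℕ) → Loc

namespace CGS

variable {Agt Loc P : Type}

def WellFormed (G : CGS Agt Loc P) : Prop := ∀ ℓ a, (G.chc ℓ a).Nonempty

def toGS (G : CGS Agt Loc P) : GS Agt Loc P ℕ where
  lab := G.lab
  mov ℓ a := ↑(G.chc ℓ a)
  step ℓ m := {G.edg ℓ m}

/-- a CGS is turn-based if in every location at most one agent has more than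
one available move. -/
def TurnBased (G : CGS Agt Loc P) : Prop :=
  ∀ ℓ (a b : Agt), 1 < (G.chc ℓ a).card → 1 < (G.chc ℓ b).card → a = b

end CGS

/-- an alternating transition system: a move of an agent is a set of locations;
a joint move leads to the intersection of the chosen sets (a singleton when the
ATS is well-formed). -/
structure ATS (Agt Loc P : Type) where
  lab : Loc → Set P
  chc : Loc → Agt → Set (Set Loc)

namespace ATS

variable {Agt Loc P : Type}

/-- well-formedness: each agent always has some available move, and each joint
choice of moves intersects in a singleton. -/
def WellFormed (T : ATS Agt Loc P) : Prop :=
  (∀ ℓ a, (T.chc ℓ a).Nonempty) ∧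
  ∀ ℓ (Q : Agt → Set Loc), (∀ a, Q a ∈ T.chc ℓ a) → ∃ ℓ', (⋂ a, Q a) = {ℓ'}

def toGS (T : ATS Agt Loc P) : GS Agt Loc P (Set Loc) where
  lab := T.lab
  mov := T.chc
  step _ Q := ⋂ a, Q a

end ATS

/-! ### Statement 5

On turn-based CGSs, `⟨A⟩(φ R ψ)` is equivalent to `¬⟨Agt∖A⟩((¬φ) U (¬ψ))`
(turn-based games are determined). -/
namespace ReleaseDualAux

open GS

variable {Agt P Loc : Type}

/-- a default valid move. -/
noncomputable def dflt (G : CGS Agt Loc P) (hwf : G.WellFormed) (ℓ : Loc) (a : Agt) : ℕ :=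
  (hwf ℓ a).choose

lemma dflt_valid (G : CGS Agt Loc P) (hwf : G.WellFormed) (ℓ : Loc) :
    G.toGS.ValidMove ℓ (dflt G hwf ℓ) := fun a => (hwf ℓ a).choose_spec

lemma mem_step_iff (G : CGS Agt Loc P) (ℓ ℓ' : Loc) (m : Agt → ℕ) :
    ℓ' ∈ G.toGS.step ℓ m ↔ ℓ' = G.edg ℓ m := Set.mem_singleton_iff

/-- one-step determinacy of turn-based games. -/
lemma one_step (G : CGS Agt Loc P) (hwf : G.WellFormed) (htb : G.TurnBased)
    (C : Set Agt) (T : Set Loc) (ℓ : Loc) (h : ℓ ∉ G.toGS.CPre C T) :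
    ℓ ∈ G.toGS.CPre Cᶜ Tᶜ := by
  classical
  by_cases hc : ∀ a ∈ C, (G.chc ℓ a).card ≤ 1
  · have h1 : ¬ G.toGS.Next ℓ C (dflt G hwf ℓ) ⊆ T := by
      intro hsub
      exact h ⟨dflt G hwf ℓ, fun a _ => dflt_valid G hwf ℓ a, hsub⟩
    obtain ⟨ℓ', hℓ', hℓ'T⟩ := Set.not_subset.mp h1
    obtain ⟨m, hmv, _, hstep⟩ := hℓ'
    refine ⟨m, fun a _ => hmv a, ?_⟩
    rintro ℓ'' ⟨m', hm'v, hag', hstep'⟩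
    have hmm : m' = m := by
      funext a
      by_cases ha : a ∈ C
      · exact Finset.card_le_one.mp (hc a ha) _ (hm'v a) _ (hmv a)
      · exact hag' a ha
    rw [mem_step_iff] at hstep hstep'
    rw [hstep', hmm, ← hstep]
    exact hℓ'T
  · push_neg at hc
    obtain ⟨a₀, ha₀C, ha₀⟩ := hc
    have hout : ∀ a, a ∉ C → (G.chc ℓ a).card ≤ 1 := by
      intro a haC
      by_contra hgt
      push_neg at hgt
      exact haC (by rw [htb ℓ a a₀ hgt ha₀]; exact ha₀C)
    refine ⟨dflt G hwf ℓ, fun a _ => dflt_valid G hwf ℓ a, ?_⟩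
    rintro ℓ' ⟨m', hm'v, _, hstep'⟩
    have h1 : ¬ G.toGS.Next ℓ C m' ⊆ T := fun hsub => h ⟨m', fun a _ => hm'v a, hsub⟩
    obtain ⟨ℓ'', hmem, hT⟩ := Set.not_subset.mp h1
    obtain ⟨m'', hm''v, hag'', hstep''⟩ := hmem
    have hmm : m'' = m' := by
      funext a
      by_cases ha : a ∈ C
      · exact hag'' a ha
      · exact Finset.card_le_one.mp (hout a ha) _ (hm''v a) _ (hm'v a)
    rw [mem_step_iff] at hstep' hstep''
    rw [hstep', ← hmm, ← hstep'']
    exact hT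

/-! ### the least fixpoint of the until operator -/

variable (G : CGS Agt Loc P) (B : Set Agt) (Nφ Nψ : Set Loc)

/-- approximants of the winning region of coalition `B` for `Nφ U Nψ`. -/
def Wn : ℕ → Set Loc
  | 0 => ∅
  | n + 1 => Nψ ∪ (Nφ ∩ G.toGS.CPre B (Wn n))

lemma Wn_mono : Monotone (Wn G B Nφ Nψ) := by
  apply monotone_nat_of_le_succ
  intro n
  induction n with
  | zero => exact Set.empty_subset _
  | succ n ih =>
    exact Set.union_subset_union_right _
      (Set.inter_subset_inter_right _ (G.toGS.cpre_mono B ih))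

/-- the winning region of coalition `B` for `Nφ U Nψ`. -/
def WW : Set Loc := ⋃ n, Wn G B Nφ Nψ n

lemma exists_subset_Wn [Fintype Loc] {s : Set Loc} (hs : s ⊆ WW G B Nφ Nψ) :
    ∃ N, s ⊆ Wn G B Nφ Nψ N := by
  classical
  set f : Loc → ℕ := fun x => if h : ∃ n, x ∈ Wn G B Nφ Nψ n then h.choose else 0 with hf
  refine ⟨Finset.univ.sup f, fun x hx => ?_⟩
  have hx' : ∃ n, x ∈ Wn G B Nφ Nψ n := Set.mem_iUnion.mp (hs hx)
  have hxf : x ∈ Wn G B Nφ Nψ (f x) := by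
    rw [hf]; simp only [dif_pos hx']; exact hx'.choose_spec
  exact Wn_mono G B Nφ Nψ (Finset.le_sup (Finset.mem_univ x)) hxf

lemma prefixed [Fintype Loc] :
    Nψ ∪ (Nφ ∩ G.toGS.CPre B (WW G B Nφ Nψ)) ⊆ WW G B Nφ Nψ := by
  rintro ℓ (hψ | ⟨hφ, mB, hmv, hsub⟩)
  · exact Set.mem_iUnion.mpr ⟨1, Or.inl hψ⟩
  · obtain ⟨N, hN⟩ := exists_subset_Wn G B Nφ Nψ hsub
    exact Set.mem_iUnion.mpr ⟨N + 1, Or.inr ⟨hφ, mB, hmv, hN⟩⟩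

lemma Nψ_subset_WW : Nψ ⊆ WW G B Nφ Nψ :=
  fun _ h => Set.mem_iUnion.mpr ⟨1, Or.inl h⟩

/-! ### the strategy of coalition `B` from its winning region -/

open Classical in
/-- the rank of a location in the fixpoint computation. -/
noncomputable def rk (ℓ : Loc) : ℕ :=
  if h : ∃ n, ℓ ∈ Wn G B Nφ Nψ (n + 1) then Nat.find h else 0

open Classical in
lemma rk_spec {ℓ : Loc} (h : ∃ n, ℓ ∈ Wn G B Nφ Nψ (n + 1)) :
    ℓ ∈ Wn G B Nφ Nψ (rk G B Nφ Nψ ℓ + 1) := by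
  rw [rk, dif_pos h]; exact Nat.find_spec h

open Classical in
lemma rk_le {ℓ : Loc} {n : ℕ} (h : ℓ ∈ Wn G B Nφ Nψ (n + 1)) :
    rk G B Nφ Nψ ℓ ≤ n := by
  rw [rk, dif_pos ⟨n, h⟩]; exact Nat.find_min' _ h

open Classical in
/-- the memoryless move of coalition `B`. -/
noncomputable def bmove (hwf : G.WellFormed) (ℓ : Loc) : Agt → ℕ :=
  if h : ∃ mB, (∀ b ∈ B, mB b ∈ G.toGS.mov ℓ b) ∧
      G.toGS.Next ℓ B mB ⊆ Wn G B Nφ Nψ (rk G B Nφ Nψ ℓ)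
  then h.choose else dflt G hwf ℓ

lemma bmove_valid (hwf : G.WellFormed) (ℓ : Loc) (b : Agt) (hb : b ∈ B) :
    bmove G B Nφ Nψ hwf ℓ b ∈ G.toGS.mov ℓ b := by
  rw [bmove]
  split
  · next h => exact h.choose_spec.1 b hb
  · exact dflt_valid G hwf ℓ b

lemma bmove_step (hwf : G.WellFormed) {ℓ : Loc} {n : ℕ}
    (hn : ℓ ∈ Wn G B Nφ Nψ (n + 1)) (hψ : ℓ ∉ Nψ) :
    G.toGS.Next ℓ B (bmove G B Nφ Nψ hwf ℓ) ⊆ Wn G B Nφ Nψ n := by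
  have h2 := rk_spec G B Nφ Nψ ⟨n, hn⟩
  rcases h2 with h2 | h2
  · exact absurd h2 hψ
  obtain ⟨_, mB, hmv, hsub⟩ := h2
  have hcond : ∃ mB, (∀ b ∈ B, mB b ∈ G.toGS.mov ℓ b) ∧
      G.toGS.Next ℓ B mB ⊆ Wn G B Nφ Nψ (rk G B Nφ Nψ ℓ) := ⟨mB, hmv, hsub⟩
  have : G.toGS.Next ℓ B (bmove G B Nφ Nψ hwf ℓ) ⊆ Wn G B Nφ Nψ (rk G B Nφ Nψ ℓ) := by
    rw [bmove, dif_pos hcond]; exact hcond.choose_spec.2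
  exact this.trans (Wn_mono G B Nφ Nψ (rk_le G B Nφ Nψ hn))

lemma untl_win (hwf : G.WellFormed) :
    ∀ n (ρ : ℕ → Loc),
      (∀ i, ρ (i + 1) ∈ G.toGS.Next (ρ i) B (bmove G B Nφ Nψ hwf (ρ i))) →
      ρ 0 ∈ Wn G B Nφ Nψ n → ∃ i, ρ i ∈ Nψ ∧ ∀ j < i, ρ j ∈ Nφ := by
  intro n
  induction n with
  | zero => exact fun ρ _ h => absurd h (Set.notMem_empty _)
  | succ n ih =>
    intro ρ hcons h0
    by_cases hψ : ρ 0 ∈ Nψ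
    · exact ⟨0, hψ, fun j hj => absurd hj (Nat.not_lt_zero j)⟩
    · have hφ0 : ρ 0 ∈ Nφ := by
        rcases h0 with h | h
        · exact absurd h hψ
        · exact h.1
      have h1 : ρ 1 ∈ Wn G B Nφ Nψ n := bmove_step G B Nφ Nψ hwf h0 hψ (hcons 0)
      obtain ⟨i, hi, hj⟩ := ih (fun i => ρ (i + 1)) (fun i => hcons (i + 1)) h1
      refine ⟨i + 1, hi, fun j hjlt => ?_⟩
      cases j with
      | zero => exact hφ0
      | succ k => exact hj k (by omega)

/-! ### the strategy of coalition `A` outside the winning region of `B` -/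

open Classical in
/-- the memoryless move of coalition `A` staying outside `W`. -/
noncomputable def amove (hwf : G.WellFormed) (A : Set Agt) (W : Set Loc) (ℓ : Loc) :
    Agt → ℕ :=
  if h : ∃ mA, (∀ a ∈ A, mA a ∈ G.toGS.mov ℓ a) ∧ G.toGS.Next ℓ A mA ⊆ Wᶜ
  then h.choose else dflt G hwf ℓ

lemma amove_valid (hwf : G.WellFormed) (A : Set Agt) (W : Set Loc) (ℓ : Loc)
    (a : Agt) (ha : a ∈ A) : amove G hwf A W ℓ a ∈ G.toGS.mov ℓ a := by
  rw [amove]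
  split
  · next h => exact h.choose_spec.1 a ha
  · exact dflt_valid G hwf ℓ a

lemma amove_step (hwf : G.WellFormed) (A : Set Agt) (W : Set Loc) {ℓ : Loc}
    (h : ℓ ∈ G.toGS.CPre A Wᶜ) :
    G.toGS.Next ℓ A (amove G hwf A W ℓ) ⊆ Wᶜ := by
  have h' : ∃ mA, (∀ a ∈ A, mA a ∈ G.toGS.mov ℓ a) ∧ G.toGS.Next ℓ A mA ⊆ Wᶜ := h
  rw [amove, dif_pos h']
  exact h'.choose_spec.2

lemma avoid_W [Fintype Loc] (hwf : G.WellFormed) (htb : G.TurnBased) (A : Set Agt)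
    (hB : B = Aᶜ) (ρ : ℕ → Loc)
    (hcons : ∀ i, ρ (i + 1) ∈ G.toGS.Next (ρ i) A (amove G hwf A (WW G B Nφ Nψ) (ρ i)))
    (h0 : ρ 0 ∉ WW G B Nφ Nψ) :
    ∀ i, (∀ j < i, ρ j ∈ Nφ) → ρ i ∉ WW G B Nφ Nψ := by
  subst hB
  intro i
  induction i with
  | zero => exact fun _ => h0
  | succ i ih =>
    intro hall
    have hiW : ρ i ∉ WW G Aᶜ Nφ Nψ := ih fun j hj => hall j (by omega)
    have hφi : ρ i ∈ Nφ := hall i (by omega)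
    have hcp : ρ i ∉ G.toGS.CPre Aᶜ (WW G Aᶜ Nφ Nψ) := by
      intro hc
      exact hiW (prefixed G Aᶜ Nφ Nψ (Or.inr ⟨hφi, hc⟩))
    have h1 := one_step G hwf htb Aᶜ (WW G Aᶜ Nφ Nψ) (ρ i) hcp
    rw [compl_compl] at h1
    exact amove_step G hwf A (WW G Aᶜ Nφ Nψ) h1 (hcons i)

/-! ### semantic wrappers -/

lemma hist_succ {Loc : Type} (ρ : ℕ → Loc) (n : ℕ) :
    GS.hist ρ (n + 1) = GS.hist ρ n ++ [ρ n] := by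
  simp only [GS.hist]
  rw [List.ofFn_succ']
  simp [List.concat_eq_append]

/-- the run obtained by playing the joint strategy `m`, with its history. -/
def run (G : CGS Agt Loc P) (m : List Loc → Loc → Agt → ℕ) (ℓ : Loc) :
    ℕ → List Loc × Loc
  | 0 => ([], ℓ)
  | n + 1 =>
    let p := run G m ℓ n
    (p.1 ++ [p.2], G.edg p.2 (m p.1 p.2))

/-- the run obtained by playing the joint strategy `m`. -/
def rho (G : CGS Agt Loc P) (m : List Loc → Loc → Agt → ℕ) (ℓ : Loc) (n : ℕ) : Loc :=
  (run G m ℓ n).2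

lemma run_fst (G : CGS Agt Loc P) (m : List Loc → Loc → Agt → ℕ) (ℓ : Loc) (n : ℕ) :
    (run G m ℓ n).1 = GS.hist (rho G m ℓ) n := by
  induction n with
  | zero => simp [run, GS.hist]
  | succ n ih => rw [run, hist_succ]; simp [ih, rho]

lemma rho_zero (G : CGS Agt Loc P) (m : List Loc → Loc → Agt → ℕ) (ℓ : Loc) :
    rho G m ℓ 0 = ℓ := rfl

lemma rho_succ (G : CGS Agt Loc P) (m : List Loc → Loc → Agt → ℕ) (ℓ : Loc) (n : ℕ) :
    rho G m ℓ (n + 1) = G.edg (rho G m ℓ n) (m (GS.hist (rho G m ℓ) n) (rho G m ℓ n)) := by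
  rw [rho, run, ← run_fst]; rfl

lemma mem_WW_untl [Fintype Loc] (G : CGS Agt Loc P) (hwf : G.WellFormed) (B : Set Agt)
    (φ ψ : SForm Agt P) {ℓ : Loc}
    (h : ℓ ∈ WW G B {x | ¬ SSat G.toGS φ x} {x | ¬ SSat G.toGS ψ x}) :
    SSat G.toGS (.coal B (.untl φ.snot ψ.snot)) ℓ := by
  set Nφ : Set Loc := {x | ¬ SSat G.toGS φ x} with hNφ
  set Nψ : Set Loc := {x | ¬ SSat G.toGS ψ x} with hNψ
  rw [SSat]
  refine ⟨fun _ x => bmove G B Nφ Nψ hwf x,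
    fun _ ℓ' a ha => bmove_valid G B Nφ Nψ hwf ℓ' a ha, ?_⟩
  rintro ρ ⟨h0, hcons⟩
  obtain ⟨n, hn⟩ := Set.mem_iUnion.mp h
  obtain ⟨i, hiψ, hjφ⟩ := untl_win G B Nφ Nψ hwf n ρ hcons (by rw [h0]; exact hn)
  simp only [PSat, SSat]
  exact ⟨i, hiψ, hjφ⟩

lemma notMem_WW_rel [Fintype Loc] (G : CGS Agt Loc P) (hwf : G.WellFormed)
    (htb : G.TurnBased) (A : Set Agt) (φ ψ : SForm Agt P) {ℓ : Loc}
    (h : ℓ ∉ WW G Aᶜ {x | ¬ SSat G.toGS φ x} {x | ¬ SSat G.toGS ψ x}) :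
    SSat G.toGS (.coal A (PForm.rel φ ψ)) ℓ := by
  set Nφ : Set Loc := {x | ¬ SSat G.toGS φ x} with hNφ
  set Nψ : Set Loc := {x | ¬ SSat G.toGS ψ x} with hNψ
  rw [SSat]
  refine ⟨fun _ x => amove G hwf A (WW G Aᶜ Nφ Nψ) x,
    fun _ ℓ' a ha => amove_valid G hwf A _ ℓ' a ha, ?_⟩
  rintro ρ ⟨h0, hcons⟩
  simp only [PForm.rel, PSat, SSat]
  rintro ⟨i, hiψ, hjφ⟩
  have hinv := avoid_W G Aᶜ Nφ Nψ hwf htb A rfl ρ hcons (by rw [h0]; exact h) i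
    (fun j hj => hjφ j hj)
  exact hinv (Nψ_subset_WW G Aᶜ Nφ Nψ hiψ)

end ReleaseDualAux
theorem turn_based_release_dual
    (Agt P Loc : Type) [Fintype Agt] [Fintype P] [Fintype Loc]
    (G : CGS Agt Loc P) (hwf : G.WellFormed) (htb : G.TurnBased)
    (A : Set Agt) (φ ψ : SForm Agt P) (ℓ : Loc) :
    SSat G.toGS (.coal A (PForm.rel φ ψ)) ℓ ↔
      ¬ SSat G.toGS (.coal Aᶜ (.untl φ.snot ψ.snot)) ℓ := by
  classical
  constructor
  · rw [SSat, SSat]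
    rintro ⟨FA, hFAv, hFA⟩ ⟨FB, hFBv, hFB⟩
    set m : List Loc → Loc → Agt → ℕ :=
      fun h ℓ' a => if a ∈ A then FA h ℓ' a else FB h ℓ' a with hm
    set ρ : ℕ → Loc := ReleaseDualAux.rho G m ℓ with hρ
    have hstep : ∀ n, ρ (n + 1) = G.edg (ρ n) (m (GS.hist ρ n) (ρ n)) :=
      fun n => ReleaseDualAux.rho_succ G m ℓ n
    have hmv : ∀ n, G.toGS.ValidMove (ρ n) (m (GS.hist ρ n) (ρ n)) := by
      intro n a
      by_cases ha : a ∈ A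
      · simpa [hm, ha] using hFAv (GS.hist ρ n) (ρ n) a ha
      · simpa [hm, ha] using hFBv (GS.hist ρ n) (ρ n) a ha
    have outA : G.toGS.Out A ℓ FA ρ := by
      refine ⟨rfl, fun i => ⟨m (GS.hist ρ i) (ρ i), hmv i, fun a ha => if_pos ha, ?_⟩⟩
      rw [ReleaseDualAux.mem_step_iff]
      exact hstep i
    have outB : G.toGS.Out Aᶜ ℓ FB ρ := by
      refine ⟨rfl, fun i => ⟨m (GS.hist ρ i) (ρ i), hmv i, fun a ha => if_neg ha, ?_⟩⟩
      rw [ReleaseDualAux.mem_step_iff]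
      exact hstep i
    have h1 := hFA ρ outA
    have h2 := hFB ρ outB
    simp only [PForm.rel, PSat] at h1
    exact h1 h2
  · intro hnot
    by_cases hW : ℓ ∈ ReleaseDualAux.WW G Aᶜ {x | ¬ SSat G.toGS φ x} {x | ¬ SSat G.toGS ψ x}
    · exact absurd (ReleaseDualAux.mem_WW_untl G hwf Aᶜ φ ψ hW) hnot
    · exact ReleaseDualAux.notMem_WW_rel G hwf htb A φ ψ hW
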